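/- Suppose the sliding mode holds on the second output channel: e_{y₂}(t) = 0 and ė_{y₂}(t) = 0 for all t ≥ T, where ė_{y₂} = -μ(t) + Ā₂₂e₂ + Φ₂(t)f(t) + W̃₂(t) with Φ₂(t) invertible, ‖W̃₂(t)‖ ≤ γ‖e₂(t)‖, and ‖Φ₂(t)⁻¹‖ ≤ M, ‖Φ₂(t)⁻¹Ā₂₂‖ ≤ M' uniformly. Define f̂(t) = Φ₂(t)⁻¹μ(t). If e₂(t) → 0 as t → ∞, then ‖f(t) - f̂(t)‖ ≤ (M' + γM)‖e₂(t)‖ for t ≥ T, and hence f̂(t) - f(t) → 0 as t → ∞. -/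

import Mathlib

open Matrix Filter

/-!
On the sliding surface the output error and its derivative vanish, so the dynamics of `e_{y₂}`
solve for the injection: `μ = Ā₂₂ e₂ + Φ₂ f + W̃₂`. Applying `Φ₂⁻¹` gives
`f̂ - f = Φ₂⁻¹ Ā₂₂ e₂ + Φ₂⁻¹ W̃₂`, whose norm is at most `(M' + γ M) ‖e₂‖`; this bound is
`O(‖e₂‖)`, hence the reconstruction error tends to zero with `e₂`.
-/

lemma Matrix.inv_mulVec_add_mulVec_add_sub {R n k : Type*} [CommRing R] [Fintype n]
    [DecidableEq n] [Fintype k] {A : Matrix n n R} (hA : IsUnit A) (B : Matrix n k R)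
    (e : k → R) (f w : n → R) :
    A⁻¹ *ᵥ (B *ᵥ e + A *ᵥ f + w) - f = (A⁻¹ * B) *ᵥ e + A⁻¹ *ᵥ w := by
  rw [mulVec_add, mulVec_add, mulVec_mulVec, mulVec_mulVec,
    nonsing_inv_mul _ ((isUnit_iff_isUnit_det A).mp hA), one_mulVec]
  abel

lemma norm_add_le_of_le_mul_norm {E F G : Type*} [SeminormedAddCommGroup E]
    [SeminormedAddGroup F] [SeminormedAddGroup G] {u v : E} {w : F} {e : G} {M M' γ : ℝ}
    (hM : 0 ≤ M) (hu : ‖u‖ ≤ M' * ‖e‖) (hv : ‖v‖ ≤ M * ‖w‖) (hw : ‖w‖ ≤ γ * ‖e‖) :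
    ‖u + v‖ ≤ (M' + γ * M) * ‖e‖ :=
  calc ‖u + v‖ ≤ ‖u‖ + ‖v‖ := norm_add_le u v
    _ ≤ M' * ‖e‖ + M * (γ * ‖e‖) := add_le_add hu (hv.trans (by gcongr))
    _ = (M' + γ * M) * ‖e‖ := by ring

theorem stmt_12_general {r m : ℕ} (T γ M M' : ℝ)
    (hM : 0 < M)
    (Abar₂₂ : Matrix (Fin r) (Fin m) ℝ)
    (Φ₂ : ℝ → Matrix (Fin r) (Fin r) ℝ)
    (ey₂ : ℝ → EuclideanSpace ℝ (Fin r))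
    (e₂ : ℝ → EuclideanSpace ℝ (Fin m))
    (f μ : ℝ → EuclideanSpace ℝ (Fin r))
    (Wtil : ℝ → Fin r → ℝ)
    (hinv : ∀ t, IsUnit (Φ₂ t))
    (hdyn : ∀ t, deriv ey₂ t =
      -μ t + (WithLp.equiv 2 (Fin r → ℝ)).symm
        (Abar₂₂ *ᵥ e₂ t + Φ₂ t *ᵥ f t + Wtil t))
    (hslide : ∀ t ≥ T, ey₂ t = 0 ∧ deriv ey₂ t = 0)
    (hW : ∀ t, ‖(WithLp.equiv 2 (Fin r → ℝ)).symm (Wtil t)‖ ≤ γ * ‖e₂ t‖)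
    (hMbound : ∀ t, ∀ v : EuclideanSpace ℝ (Fin r),
      ‖(WithLp.equiv 2 (Fin r → ℝ)).symm ((Φ₂ t)⁻¹ *ᵥ v)‖ ≤ M * ‖v‖)
    (hM'bound : ∀ t, ∀ v : EuclideanSpace ℝ (Fin m),
      ‖(WithLp.equiv 2 (Fin r → ℝ)).symm (((Φ₂ t)⁻¹ * Abar₂₂) *ᵥ v)‖ ≤ M' * ‖v‖)
    (he₂ : Tendsto e₂ atTop (nhds 0)) :
    (∀ t ≥ T,
        ‖f t - (WithLp.equiv 2 (Fin r → ℝ)).symm ((Φ₂ t)⁻¹ *ᵥ μ t)‖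
          ≤ (M' + γ * M) * ‖e₂ t‖) ∧
      Tendsto (fun t => (WithLp.equiv 2 (Fin r → ℝ)).symm ((Φ₂ t)⁻¹ *ᵥ μ t) - f t)
        atTop (nhds 0) := by
  have herr : ∀ t ≥ T, (WithLp.equiv 2 (Fin r → ℝ)).symm ((Φ₂ t)⁻¹ *ᵥ μ t) - f t =
      (WithLp.equiv 2 (Fin r → ℝ)).symm (((Φ₂ t)⁻¹ * Abar₂₂) *ᵥ e₂ t) +
        (WithLp.equiv 2 (Fin r → ℝ)).symm ((Φ₂ t)⁻¹ *ᵥ Wtil t) := by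
    intro t ht
    have hμ : μ t = (WithLp.equiv 2 (Fin r → ℝ)).symm
        (Abar₂₂ *ᵥ e₂ t + Φ₂ t *ᵥ f t + Wtil t) :=
      neg_add_eq_zero.mp ((hdyn t).symm.trans (hslide t ht).2)
    rw [hμ]
    have := congrArg (WithLp.equiv 2 (Fin r → ℝ)).symm
      (inv_mulVec_add_mulVec_add_sub (hinv t) Abar₂₂ (e₂ t) (f t) (Wtil t))
    simpa only [WithLp.equiv_symm_apply, WithLp.equiv_apply, WithLp.toLp_sub,
      WithLp.toLp_add, WithLp.toLp_ofLp, WithLp.ofLp_add, WithLp.ofLp_toLp] using this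
  have hbound : ∀ t ≥ T, ‖(WithLp.equiv 2 (Fin r → ℝ)).symm ((Φ₂ t)⁻¹ *ᵥ μ t) - f t‖ ≤
      (M' + γ * M) * ‖e₂ t‖ := by
    intro t ht
    rw [herr t ht]
    exact norm_add_le_of_le_mul_norm hM.le (hM'bound t (e₂ t)) (hMbound t _) (hW t)
  refine ⟨fun t ht => ?_,
    (Asymptotics.IsBigO.of_bound _ ((eventually_ge_atTop T).mono hbound)).trans_tendsto he₂⟩
  rw [norm_sub_rev]
  exact hbound t ht

/-- Theorem 4.1: asymptotically exact fault reconstruction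
from the equivalent output error injection on the sliding surface. -/
theorem stmt_12 {r m : ℕ} (T γ M M' : ℝ)
    (hγ : 0 < γ) (hM : 0 < M) (hM' : 0 < M')
    (Abar₂₂ : Matrix (Fin r) (Fin m) ℝ)
    (Φ₂ : ℝ → Matrix (Fin r) (Fin r) ℝ)
    (ey₂ : ℝ → EuclideanSpace ℝ (Fin r))
    (e₂ : ℝ → EuclideanSpace ℝ (Fin m))
    (f μ : ℝ → EuclideanSpace ℝ (Fin r))
    (Wtil : ℝ → Fin r → ℝ)
    (hinv : ∀ t, IsUnit (Φ₂ t))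
    (hdyn : ∀ t, deriv ey₂ t =
      -μ t + (WithLp.equiv 2 (Fin r → ℝ)).symm
        (Abar₂₂ *ᵥ e₂ t + Φ₂ t *ᵥ f t + Wtil t))
    (hslide : ∀ t ≥ T, ey₂ t = 0 ∧ deriv ey₂ t = 0)
    (hW : ∀ t, ‖(WithLp.equiv 2 (Fin r → ℝ)).symm (Wtil t)‖ ≤ γ * ‖e₂ t‖)
    (hMbound : ∀ t, ∀ v : EuclideanSpace ℝ (Fin r),
      ‖(WithLp.equiv 2 (Fin r → ℝ)).symm ((Φ₂ t)⁻¹ *ᵥ v)‖ ≤ M * ‖v‖)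
    (hM'bound : ∀ t, ∀ v : EuclideanSpace ℝ (Fin m),
      ‖(WithLp.equiv 2 (Fin r → ℝ)).symm (((Φ₂ t)⁻¹ * Abar₂₂) *ᵥ v)‖ ≤ M' * ‖v‖)
    (he₂ : Tendsto e₂ atTop (nhds 0)) :
    (∀ t ≥ T,
        ‖f t - (WithLp.equiv 2 (Fin r → ℝ)).symm ((Φ₂ t)⁻¹ *ᵥ μ t)‖
          ≤ (M' + γ * M) * ‖e₂ t‖) ∧
      Tendsto (fun t => (WithLp.equiv 2 (Fin r → ℝ)).symm ((Φ₂ t)⁻¹ *ᵥ μ t) - f t)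
        atTop (nhds 0) :=
  stmt_12_general T γ M M' hM Abar₂₂ Φ₂ ey₂ e₂ f μ Wtil hinv hdyn hslide hW hMbound hM'bound he₂
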